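/- arXiv:1507.07771 — 2 statements merged into one kernel-verified Lean document; each statement's English description precedes it below -/
import Mathlib

section
/- Let m ≥ 1 be an integer, A, B reals with 0 < A < 1 and 2mA + B = m (so A·i + B > 0 for all integers i ≥ m), and D > 0. Then K(d)·d^{1/A} tends to (D/(A·m))·Γ(m + (B+1)/A)/(A·Γ(m + B/A)) as d → ∞; that is, K(d) is asymptotically equivalent to (D/(A·m))·[Γ(m + (B+1)/A)/(A·Γ(m + B/A))]·d^{−1/A}. -/
open MeasureTheory ProbabilityTheory Real Filter

noncomputable section

/-- `c(m,d)` from the paper. -/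
def cmd (m : ℕ) (A B : ℝ) (d : ℕ) : ℝ :=
  (Real.Gamma (d + B / A) * Real.Gamma (m + (B + 1) / A)) /
    (A * Real.Gamma (d + (B + A + 1) / A) * Real.Gamma (m + B / A))

/-- `K(d)` from the paper. -/
def Kd (m : ℕ) (A B D : ℝ) (d : ℕ) : ℝ :=
  cmd m A B d * (D + D / m * ∑ i ∈ Finset.Ico m d, (i : ℝ) / (A * i + B))

variable {Ω : Type*}

/-- The degree of vertex `v` in the multigraph at time `n`, where
`e n i j` is the number of edges between `i` and `j` (`e n v v` counts loops,
each contributing `2` to the degree). -/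
def degOf (e : ℕ → ℕ → ℕ → Ω → ℕ) (n v : ℕ) (ω : Ω) : ℕ :=
  (∑ j ∈ Finset.Icc 1 n, e n v j ω) + e n v v ω

/-- The σ-algebra generated by the graph at time `n`. -/
def sigmaOf [MeasurableSpace Ω] (e : ℕ → ℕ → ℕ → Ω → ℕ) (n : ℕ) : MeasurableSpace Ω :=
  ⨆ i : ℕ, ⨆ j : ℕ, MeasurableSpace.comap (fun ω => e n i j ω) ⊤

/-- `N_n(d)`: the number of vertices of degree `d` at time `n`. -/
def Ncount (e : ℕ → ℕ → ℕ → Ω → ℕ) (n d : ℕ) (ω : Ω) : ℕ :=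
  ((Finset.Icc 1 n).filter (fun v => degOf e n v ω = d)).card

/-- The set of neighbours of `v` (distinct from `v`) at time `n`. -/
def nbrOf (e : ℕ → ℕ → ℕ → Ω → ℕ) (n v : ℕ) (ω : Ω) : Finset ℕ :=
  (Finset.Icc 1 n).filter (fun j => j ≠ v ∧ 1 ≤ e n v j ω)

/-- `T_n(d)`: the number of edges (without multiplicity) between neighbours of
vertices of degree `d`, summed over all vertices of degree `d`. -/
def Tcount (e : ℕ → ℕ → ℕ → Ω → ℕ) (n d : ℕ) (ω : Ω) : ℕ :=
  ∑ v ∈ (Finset.Icc 1 n).filter (fun v => degOf e n v ω = d),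
    (((nbrOf e n v ω) ×ˢ (nbrOf e n v ω)).filter
      (fun p => p.1 < p.2 ∧ 1 ≤ e n p.1 p.2 ω)).card


/-- The number of triangles of the simple graph underlying `G_m^n`
(loops and edge multiplicities discarded). -/
def triCount (e : ℕ → ℕ → ℕ → Ω → ℕ) (n : ℕ) (ω : Ω) : ℕ :=
  ((Finset.Icc 1 n ×ˢ Finset.Icc 1 n ×ˢ Finset.Icc 1 n).filter
    (fun t => t.1 < t.2.1 ∧ t.2.1 < t.2.2 ∧
      1 ≤ e n t.1 t.2.1 ω ∧ 1 ≤ e n t.2.1 t.2.2 ω ∧ 1 ≤ e n t.1 t.2.2 ω)).card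

/-- The number of pairs of adjacent edges (paths of length two) of the simple
graph underlying `G_m^n`. -/
def pathCount (e : ℕ → ℕ → ℕ → Ω → ℕ) (n : ℕ) (ω : Ω) : ℕ :=
  ∑ v ∈ Finset.Icc 1 n, ((nbrOf e n v ω).card).choose 2

/-- The global clustering coefficient `C₁(G_m^n)`. -/
def globalCC (e : ℕ → ℕ → ℕ → Ω → ℕ) (n : ℕ) (ω : Ω) : ℝ :=
  3 * triCount e n ω / pathCount e n ω

/-- `W_n`: the sum of the squares of the degrees of all vertices of `G_m^n`. -/
def Wsum (e : ℕ → ℕ → ℕ → Ω → ℕ) (n : ℕ) (ω : Ω) : ℕ :=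
  ∑ v ∈ Finset.Icc 1 n, (degOf e n v ω) ^ 2

/-- A random graph process from the PA-class with parameters `m`, `A`, `B`,
starting at time `n₀`. -/
structure PAGraphProcess (m n₀ : ℕ) (A B : ℝ) (Ω : Type*) [MeasurableSpace Ω]
    (μ : Measure Ω) : Type _ where
  /-- `e n i j ω` is the number of edges between vertices `i` and `j` in `G_m^n`. -/
  e : ℕ → ℕ → ℕ → Ω → ℕ
  meas_e : ∀ n i j, Measurable (e n i j)
  symm : ∀ n i j ω, e n i j ω = e n j i ω
  /-- at time `n` the vertex set is `{1, …, n}` -/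
  edges_supp : ∀ n, n₀ ≤ n → ∀ i j (ω : Ω),
    i ∉ Finset.Icc 1 n ∨ j ∉ Finset.Icc 1 n → e n i j ω = 0
  /-- `G_m^n` has `m · n` edges -/
  edges_total : ∀ n, n₀ ≤ n → ∀ ω : Ω,
    ∑ p ∈ (Finset.Icc 1 n ×ˢ Finset.Icc 1 n).filter (fun p => p.1 ≤ p.2),
      e n p.1 p.2 ω = m * n
  /-- `G_m^{n+1}` is obtained from `G_m^n` by keeping all old edges … -/
  edges_extend : ∀ n, n₀ ≤ n → ∀ i j, i ≤ n → j ≤ n → ∀ ω : Ω,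
    e (n + 1) i j ω = e n i j ω
  /-- … and adding the vertex `n+1` together with `m` new edges joining it to `{1,…,n+1}` -/
  edges_new : ∀ n, n₀ ≤ n → ∀ ω : Ω, ∑ j ∈ Finset.Icc 1 (n + 1), e (n + 1) (n + 1) j ω = m
  /-- the constant in the error terms -/
  C : ℝ
  hC : 0 < C
  cond_stay : ∀ n, n₀ ≤ n → ∀ v, 1 ≤ v → v ≤ n → ∀ᵐ ω ∂μ,
    |(μ⟦{ω' | degOf e (n + 1) v ω' = degOf e n v ω'} | sigmaOf e n⟧) ω -
        (1 - A * degOf e n v ω / n - B / n)| ≤ C * (degOf e n v ω) ^ 2 / n ^ 2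
  cond_step : ∀ n, n₀ ≤ n → ∀ v, 1 ≤ v → v ≤ n → ∀ᵐ ω ∂μ,
    |(μ⟦{ω' | degOf e (n + 1) v ω' = degOf e n v ω' + 1} | sigmaOf e n⟧) ω -
        (A * degOf e n v ω / n + B / n)| ≤ C * (degOf e n v ω) ^ 2 / n ^ 2
  cond_jump : ∀ n, n₀ ≤ n → ∀ v, 1 ≤ v → v ≤ n → ∀ j, 2 ≤ j → j ≤ m → ∀ᵐ ω ∂μ,
    (μ⟦{ω' | degOf e (n + 1) v ω' = degOf e n v ω' + j} | sigmaOf e n⟧) ω ≤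
      C * (degOf e n v ω) ^ 2 / n ^ 2
  cond_new : ∀ n, n₀ ≤ n → ∀ j, 1 ≤ j → j ≤ m →
    μ {ω | degOf e (n + 1) (n + 1) ω = m + j} ≤ ENNReal.ofReal (C / n)

/-- A random graph process from the T-subclass of the PA-class, with
triangle-formation parameter `D`. -/
structure PATProcess (m n₀ : ℕ) (A B D : ℝ) (Ω : Type*) [MeasurableSpace Ω]
    (μ : Measure Ω) extends PAGraphProcess m n₀ A B Ω μ : Type _ where
  cond_tri : ∀ n, n₀ ≤ n → ∀ i j, 1 ≤ i → i < j → j ≤ n → ∀ᵐ ω ∂μ,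
    |(μ⟦{ω' | degOf e (n + 1) i ω' = degOf e n i ω' + 1 ∧
              degOf e (n + 1) j ω' = degOf e n j ω' + 1} | sigmaOf e n⟧) ω -
        (e n i j ω) * D / (m * n)| ≤ C * degOf e n i ω * degOf e n j ω / n ^ 2

/-!
`K(d) d^{1/A}` is the product of the constant `Γ(m + (B+1)/A) / (A Γ(m + B/A))`, the ratio
`Γ(d + B/A) d^{1/A+1} / Γ(d + B/A + 1/A + 1)` and `(D + (D/m) ∑_{m ≤ i < d} i/(Ai+B)) / d`.
The last factor tends to `D/(mA)`: up to `D/d` it is `D/m` times a Cesàro mean of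
`i/(Ai+B) → 1/A`. The ratio tends to `1` by Wendel's inequality
`(x/(x+s))^{1-s} ≤ Γ(x+s)/(Γ(x) x^s) ≤ 1` for `0 ≤ s ≤ 1`, a consequence of the log-convexity
of `Γ`, extended to every exponent `c ≥ 0` by the functional equation `Γ(y+1) = y Γ(y)`.
-/

open Filter Topology Finset

theorem tendsto_div_add_atTop_nhds_one (a : ℝ) :
    Tendsto (fun x : ℝ => x / (x + a)) atTop (𝓝 1) := by
  have h : Tendsto (fun x : ℝ => 1 + a * x⁻¹) atTop (𝓝 1) := by
    simpa using (tendsto_inv_atTop_zero.const_mul a).const_add 1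
  refine (h.inv₀ one_ne_zero).congr' ?_ |>.trans (by rw [inv_one])
  filter_upwards [eventually_gt_atTop 0] with x hx
  field_simp

theorem tendsto_inv_mul_sum_Ico {u : ℕ → ℝ} {l : ℝ} (h : Tendsto u atTop (𝓝 l)) (m : ℕ) :
    Tendsto (fun n : ℕ => (n : ℝ)⁻¹ * ∑ i ∈ Ico m n, u i) atTop (𝓝 l) := by
  have hinv : Tendsto (fun n : ℕ => (n : ℝ)⁻¹) atTop (𝓝 0) :=
    tendsto_inv_atTop_zero.comp tendsto_natCast_atTop_atTop
  have := h.cesaro.sub (hinv.mul_const (∑ i ∈ range m, u i))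
  rw [zero_mul, sub_zero] at this
  refine this.congr' ?_
  filter_upwards [eventually_ge_atTop m] with n hn
  rw [sum_Ico_eq_sub _ hn, mul_sub]

namespace Real

theorem Gamma_mul_add_mul_le_rpow_Gamma_mul_rpow_Gamma_of_nonneg {s t a b : ℝ} (hs : 0 < s)
    (ht : 0 < t) (ha : 0 ≤ a) (hb : 0 ≤ b) (hab : a + b = 1) :
    Gamma (a * s + b * t) ≤ Gamma s ^ a * Gamma t ^ b := by
  have hpos : 0 < a * s + b * t := by
    simpa using convex_Ioi (0 : ℝ) (Set.mem_Ioi.2 hs) (Set.mem_Ioi.2 ht) ha hb hab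
  have hconv := convexOn_log_Gamma.2 (Set.mem_Ioi.2 hs) (Set.mem_Ioi.2 ht) ha hb hab
  simp only [smul_eq_mul, Function.comp_apply] at hconv
  rw [← exp_log (Gamma_pos_of_pos hpos), rpow_def_of_pos (Gamma_pos_of_pos hs),
    rpow_def_of_pos (Gamma_pos_of_pos ht), ← exp_add]
  exact exp_le_exp.2 (by linarith)

theorem rpow_Gamma_mul_rpow_Gamma_add_one {y a b : ℝ} (hy : 0 < y) (hab : a + b = 1) :
    Gamma y ^ a * Gamma (y + 1) ^ b = Gamma y * y ^ b := by
  have hΓ := Gamma_pos_of_pos hy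
  rw [Gamma_add_one hy.ne', mul_rpow hy.le hΓ.le, mul_left_comm, ← rpow_add hΓ, hab, rpow_one,
    mul_comm]

theorem Gamma_add_le_Gamma_mul_rpow {x s : ℝ} (hx : 0 < x) (hs0 : 0 ≤ s) (hs1 : s ≤ 1) :
    Gamma (x + s) ≤ Gamma x * x ^ s :=
  calc Gamma (x + s) = Gamma ((1 - s) * x + s * (x + 1)) := by congr 1; ring
    _ ≤ Gamma x ^ (1 - s) * Gamma (x + 1) ^ s :=
      Gamma_mul_add_mul_le_rpow_Gamma_mul_rpow_Gamma_of_nonneg hx (by linarith) (by linarith)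
        hs0 (by ring)
    _ = Gamma x * x ^ s := rpow_Gamma_mul_rpow_Gamma_add_one hx (by ring)

theorem mul_Gamma_le_Gamma_add_mul_rpow {x s : ℝ} (hx : 0 < x) (hs0 : 0 ≤ s) (hs1 : s ≤ 1) :
    x * Gamma x ≤ Gamma (x + s) * (x + s) ^ (1 - s) :=
  calc x * Gamma x = Gamma (s * (x + s) + (1 - s) * (x + s + 1)) := by
        rw [← Gamma_add_one hx.ne']; congr 1; ring
    _ ≤ Gamma (x + s) ^ s * Gamma (x + s + 1) ^ (1 - s) :=
      Gamma_mul_add_mul_le_rpow_Gamma_mul_rpow_Gamma_of_nonneg (by linarith) (by linarith) hs0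
        (by linarith) (by ring)
    _ = Gamma (x + s) * (x + s) ^ (1 - s) :=
      rpow_Gamma_mul_rpow_Gamma_add_one (by linarith) (by ring)

theorem tendsto_Gamma_add_div_Gamma_mul_rpow_of_le_one {s : ℝ} (hs0 : 0 ≤ s) (hs1 : s ≤ 1) :
    Tendsto (fun x : ℝ => Gamma (x + s) / (Gamma x * x ^ s)) atTop (𝓝 1) := by
  have hlower : Tendsto (fun x : ℝ => (x / (x + s)) ^ (1 - s)) atTop (𝓝 1) := by
    simpa using (tendsto_div_add_atTop_nhds_one s).rpow_const (Or.inr (by linarith))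
  refine tendsto_of_tendsto_of_tendsto_of_le_of_le' hlower tendsto_const_nhds ?_ ?_ <;>
    filter_upwards [eventually_gt_atTop 0] with x hx
  · have hxs : 0 < x + s := by linarith
    rw [div_rpow hx.le hxs.le, rpow_sub hx, rpow_one, div_div, div_le_div_iff₀ (by positivity)
      (by positivity)]
    have := mul_le_mul_of_nonneg_right (mul_Gamma_le_Gamma_add_mul_rpow hx hs0 hs1)
      (rpow_nonneg hx.le s)
    linarith
  · rw [div_le_one (by positivity)]
    exact Gamma_add_le_Gamma_mul_rpow hx hs0 hs1

theorem tendsto_Gamma_add_add_one_div_Gamma_mul_rpow {c : ℝ}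
    (h : Tendsto (fun x : ℝ => Gamma (x + c) / (Gamma x * x ^ c)) atTop (𝓝 1)) :
    Tendsto (fun x : ℝ => Gamma (x + (c + 1)) / (Gamma x * x ^ (c + 1))) atTop (𝓝 1) := by
  have hlin := (tendsto_div_add_atTop_nhds_one c).inv₀ one_ne_zero
  rw [inv_one] at hlin
  refine (mul_one (1 : ℝ) ▸ h.mul hlin).congr' ?_
  filter_upwards [eventually_gt_atTop 0, eventually_gt_atTop (-c)] with x hx hxc
  rw [← add_assoc, Gamma_add_one (by linarith), rpow_add_one hx.ne', inv_div,
    div_mul_div_comm]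
  ring

theorem tendsto_Gamma_add_div_Gamma_mul_rpow {c : ℝ} (hc : 0 ≤ c) :
    Tendsto (fun x : ℝ => Gamma (x + c) / (Gamma x * x ^ c)) atTop (𝓝 1) := by
  obtain ⟨n, s, hs0, hs1, rfl⟩ : ∃ n : ℕ, ∃ s : ℝ, 0 ≤ s ∧ s ≤ 1 ∧ c = s + n :=
    ⟨⌊c⌋₊, c - ⌊c⌋₊, by linarith [Nat.floor_le hc], by linarith [Nat.lt_floor_add_one c],
      by ring⟩
  clear hc
  induction n with
  | zero => simpa using tendsto_Gamma_add_div_Gamma_mul_rpow_of_le_one hs0 hs1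
  | succ n ih =>
    rw [Nat.cast_succ, ← add_assoc]
    exact tendsto_Gamma_add_add_one_div_Gamma_mul_rpow ih

theorem tendsto_Gamma_add_mul_rpow_div_Gamma_add_add (a : ℝ) {c : ℝ} (hc : 0 ≤ c) :
    Tendsto (fun x : ℝ => Gamma (x + a) * x ^ c / Gamma (x + a + c)) atTop (𝓝 1) := by
  have hshift := ((tendsto_Gamma_add_div_Gamma_mul_rpow hc).comp
    (tendsto_atTop_add_const_right atTop a tendsto_id)).inv₀ one_ne_zero
  have hratio := (tendsto_div_add_atTop_nhds_one a).rpow_const (p := c) (Or.inr hc)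
  rw [inv_one] at hshift
  rw [one_rpow] at hratio
  refine (mul_one (1 : ℝ) ▸ hshift.mul hratio).congr' ?_
  filter_upwards [eventually_gt_atTop 0, eventually_gt_atTop (-a)] with x hx hxa
  have hpow := rpow_pos_of_pos (by linarith : 0 < x + a) c
  rw [Function.comp_apply, id, div_rpow hx.le (by linarith)]
  field_simp

end Real

theorem statement8_general (m : ℕ) (A B D : ℝ) (hA0 : 0 < A) :
    Filter.Tendsto (fun d : ℕ => Kd m A B D d * (d : ℝ) ^ ((1 : ℝ) / A)) Filter.atTop
      (nhds (D / (A * m) *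
        (Real.Gamma (m + (B + 1) / A) / (A * Real.Gamma (m + B / A))))) := by
  have hΓ : Tendsto (fun d : ℕ => Gamma (d + B / A) * (d : ℝ) ^ (1 / A + 1) /
      Gamma (d + B / A + (1 / A + 1))) atTop (𝓝 1) :=
    (tendsto_Gamma_add_mul_rpow_div_Gamma_add_add (B / A) (by positivity)).comp
      tendsto_natCast_atTop_atTop
  have hterm : Tendsto (fun i : ℕ => (i : ℝ) / (A * i + B)) atTop (𝓝 A⁻¹) := by
    simpa [add_comm, one_div] using tendsto_add_mul_div_add_mul_atTop_nhds 0 B 1 hA0.ne'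
  have hmean : Tendsto (fun d : ℕ => D * (d : ℝ)⁻¹ + D / m * ((d : ℝ)⁻¹ *
      ∑ i ∈ Ico m d, (i : ℝ) / (A * i + B))) atTop (𝓝 (D * 0 + D / m * A⁻¹)) :=
    ((tendsto_inv_atTop_zero.comp tendsto_natCast_atTop_atTop).const_mul D).add
      ((tendsto_inv_mul_sum_Ico hterm m).const_mul _)
  convert ((hΓ.mul hmean).const_mul
    (Gamma (m + (B + 1) / A) / (A * Gamma (m + B / A)))).congr' ?_ using 2
  · ring
  filter_upwards [eventually_gt_atTop 0] with d hd
  have hd' : (d : ℝ) ≠ 0 := by positivity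
  have harg : (d : ℝ) + B / A + (1 / A + 1) = d + (B + A + 1) / A := by
    field_simp; ring
  simp only [Kd, cmd, harg, rpow_add_one hd']
  field_simp

theorem statement8 (m : ℕ) (hm : 1 ≤ m) (A B D : ℝ) (hA0 : 0 < A) (hA1 : A < 1)
    (hAB : 2 * m * A + B = m) (hD : 0 < D) :
    Filter.Tendsto (fun d : ℕ => Kd m A B D d * (d : ℝ) ^ ((1 : ℝ) / A)) Filter.atTop
      (nhds (D / (A * m) *
        (Real.Gamma (m + (B + 1) / A) / (A * Real.Gamma (m + B / A))))) :=
  statement8_general m A B D hA0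
end
end

section
/- Let m ≥ 1 be an integer, A, B reals with 0 < A < 1 and 2mA + B = m, and D > 0. Then for every integer d ≥ m+1: K(d)/(binom(d,2)·c(m,d)) = (2D/(d·(d−1)·m))·(m + ∑_{i=m}^{d−1} i/(A·i+B)); moreover, d·K(d)/(binom(d,2)·c(m,d)) tends to 2D/(m·A) as d → ∞, i.e. K(d)/(binom(d,2)·c(m,d)) is asymptotically equivalent to (2D/(m·A))·d^{−1}. -/
open MeasureTheory ProbabilityTheory Real Filter

noncomputable section

variable {Ω : Type*}

/-!
Since `K(d) = c(m,d) · (D/m) · (m + S(d))` with `S(d) = ∑_{i=m}^{d-1} i/(A i + B)`, the closed form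
follows once `c(m,d) ≠ 0`, which holds because all Gamma arguments are positive when
`A m + B = m (1 - A) > 0`. The summands `i/(A i + B)` tend to `1/A`, so by Cesàro `S(d)/d → 1/A`,
and `d · K(d)/(binom(d,2) c(m,d)) = (2D/m) · ((m + S(d))/d) · (d/(d-1)) → 2D/(m A)`.
-/

open Finset Topology

theorem cmd_pos {m d : ℕ} {A B : ℝ} (hA : 0 < A) (hAB : 0 < A * m + B) (hd : m ≤ d) :
    0 < cmd m A B d := by
  have hmB : 0 < (m : ℝ) + B / A := by
    rw [← mul_div_cancel_left₀ (m : ℝ) hA.ne', ← add_div]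
    exact div_pos hAB hA
  have hdm : (m : ℝ) ≤ d := by exact_mod_cast hd
  have hinv : 0 < 1 / A := by positivity
  have h1 : 0 < (d : ℝ) + B / A := by linarith
  have h2 : 0 < (m : ℝ) + (B + 1) / A := by rw [add_div]; linarith
  have h3 : 0 < (d : ℝ) + (B + A + 1) / A := by
    rw [add_div, add_div, div_self hA.ne']; linarith
  unfold cmd
  have := Real.Gamma_pos_of_pos h1
  have := Real.Gamma_pos_of_pos h2
  have := Real.Gamma_pos_of_pos h3
  have := Real.Gamma_pos_of_pos hmB
  positivity

theorem Kd_eq_cmd_mul {m : ℕ} (hm : (m : ℝ) ≠ 0) (A B D : ℝ) (d : ℕ) :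
    Kd m A B D d =
      cmd m A B d * (D / m * (m + ∑ i ∈ Ico m d, (i : ℝ) / (A * i + B))) := by
  unfold Kd
  rw [mul_add (D / m), div_mul_cancel₀ D hm]

-- No condition on `d`: for `d ≤ 1` both sides are `0`, by the convention `x / 0 = 0`.
theorem Kd_div_choose_mul_cmd {m : ℕ} (hm : (m : ℝ) ≠ 0) (A B D : ℝ) {d : ℕ}
    (hc : cmd m A B d ≠ 0) :
    Kd m A B D d / ((d.choose 2 : ℝ) * cmd m A B d) =
      2 * D / ((d : ℝ) * ((d : ℝ) - 1) * m) *
        (m + ∑ i ∈ Ico m d, (i : ℝ) / (A * i + B)) := by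
  rw [Kd_eq_cmd_mul hm, mul_comm (d.choose 2 : ℝ), mul_div_mul_left _ _ hc,
    Nat.cast_choose_two]
  simp only [div_eq_mul_inv, mul_inv]
  ring

theorem tendsto_natCast_div_mul_add {A : ℝ} (hA : A ≠ 0) (B : ℝ) :
    Tendsto (fun i : ℕ => (i : ℝ) / (A * i + B)) atTop (𝓝 A⁻¹) := by
  have h := (tendsto_natCast_div_add_atTop (B / A)).const_mul A⁻¹
  rw [mul_one] at h
  refine h.congr fun i => ?_
  field_simp

theorem Filter.Tendsto.const_add_sum_Ico_div {u : ℕ → ℝ} {l : ℝ} (h : Tendsto u atTop (𝓝 l))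
    (a : ℝ) (m : ℕ) :
    Tendsto (fun d : ℕ => (a + ∑ i ∈ Ico m d, u i) / d) atTop (𝓝 l) := by
  have hconst : Tendsto (fun d : ℕ => (a - ∑ i ∈ range m, u i) / d) atTop (𝓝 0) :=
    tendsto_const_nhds.div_atTop tendsto_natCast_atTop_atTop
  have h' := h.cesaro.add hconst
  rw [add_zero] at h'
  refine h'.congr' ?_
  filter_upwards [eventually_ge_atTop m] with d hd
  rw [sum_Ico_eq_sub _ hd]
  ring

theorem statement17_general (m : ℕ) (hm : 1 ≤ m) (A B D : ℝ) (hA0 : 0 < A) (hA1 : A < 1)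
    (hAB : 2 * m * A + B = m) :
    (∀ d : ℕ, m + 1 ≤ d →
      Kd m A B D d / ((d.choose 2 : ℝ) * cmd m A B d) =
        2 * D / ((d : ℝ) * ((d : ℝ) - 1) * m) *
          (m + ∑ i ∈ Finset.Ico m d, (i : ℝ) / (A * i + B))) ∧
    Filter.Tendsto
      (fun d : ℕ => (d : ℝ) * (Kd m A B D d / ((d.choose 2 : ℝ) * cmd m A B d)))
      Filter.atTop (nhds (2 * D / (m * A))) := by
  have hm1 : (1 : ℝ) ≤ m := by exact_mod_cast hm
  have hm0 : (m : ℝ) ≠ 0 := by positivity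
  have hAmB : 0 < A * m + B := by nlinarith
  have hformula := fun d (hd : m ≤ d) =>
    Kd_div_choose_mul_cmd hm0 A B D (cmd_pos hA0 hAmB hd).ne'
  refine ⟨fun d hd => hformula d (by omega), ?_⟩
  have hlim := (((tendsto_natCast_div_mul_add hA0.ne' B).const_add_sum_Ico_div m m).mul
    (tendsto_natCast_div_add_atTop (-1 : ℝ))).const_mul (2 * D / m)
  rw [show 2 * D / m * (A⁻¹ * 1) = 2 * D / (m * A) by ring] at hlim
  refine hlim.congr' ?_
  filter_upwards [eventually_ge_atTop m] with d hd
  rw [hformula d hd, ← sub_eq_add_neg]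
  simp only [div_eq_mul_inv, mul_inv]
  ring

theorem statement17 (m : ℕ) (hm : 1 ≤ m) (A B D : ℝ) (hA0 : 0 < A) (hA1 : A < 1)
    (hAB : 2 * m * A + B = m) (hD : 0 < D) :
    (∀ d : ℕ, m + 1 ≤ d →
      Kd m A B D d / ((d.choose 2 : ℝ) * cmd m A B d) =
        2 * D / ((d : ℝ) * ((d : ℝ) - 1) * m) *
          (m + ∑ i ∈ Finset.Ico m d, (i : ℝ) / (A * i + B))) ∧
    Filter.Tendsto
      (fun d : ℕ => (d : ℝ) * (Kd m A B D d / ((d.choose 2 : ℝ) * cmd m A B d)))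
      Filter.atTop (nhds (2 * D / (m * A))) :=
  statement17_general m hm A B D hA0 hA1 hAB
end
end
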